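/- For every β > 1: there exists a unique m⋆ ∈ (0,1) with tanh(β·m⋆) = m⋆; the set of real solutions of m = tanh(βm) is exactly {−m⋆, 0, m⋆}; the minimum of the Curie–Weiss free energy F_β over [−1,1] is attained exactly at the two points m⋆ and −m⋆ (and F_β(m⋆) = F_β(−m⋆)); and m = 0 is a strict local maximum of F_β, i.e. there is δ > 0 with F_β(m) < F_β(0) for all m ∈ (−δ,δ) with m ≠ 0. -/

import Mathlib

/-!
Put `g m = artanh m - β * m`. The solutions of `m = tanh (β * m)` are the zeros of `g` in
`(-1, 1)`, and `F_β' m = β⁻¹ * g m`. On `[0, 1)` the function `g` is strictly convex with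
`g 0 = 0` and `g' 0 = 1 - β < 0`, while `g (tanh β) = β * (1 - tanh β) > 0`; so `g` has exactly
one zero `m⋆` in `(0, 1)`, is negative on `(0, m⋆)` and positive on `(m⋆, 1)`. Hence `F_β`
decreases on `[0, m⋆]` and increases on `[m⋆, 1]`, and the evenness of `F_β` and oddness of
`tanh` transfer everything to `[-1, 0]`.
-/

open Set

/-- The Curie–Weiss free energy `F_β(m)` (using that `Real.log 0 = 0` in Mathlib, so the
convention `0·log 0 = 0` is automatic). -/
noncomputable def cwFreeEnergy (β m : ℝ) : ℝ :=
  -m ^ 2 / 2 + β⁻¹ *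
    (((1 + m) / 2) * Real.log ((1 + m) / 2) + ((1 - m) / 2) * Real.log ((1 - m) / 2))

open Filter Topology Real

section StrictConvex

variable {𝕜 : Type*} [Field 𝕜] [LinearOrder 𝕜] [IsStrictOrderedRing 𝕜] {s : Set 𝕜} {f : 𝕜 → 𝕜}
  {a b x : 𝕜}

theorem StrictConvexOn.neg_of_mem_Ioo_of_eq_zero (hf : StrictConvexOn 𝕜 s f) (ha : a ∈ s)
    (hb : b ∈ s) (hfa : f a = 0) (hfb : f b = 0) (hx : x ∈ Ioo a b) : f x < 0 := by
  have := hf.secant_strict_mono_aux1 ha hb hx.1 hx.2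
  rw [hfa, hfb, mul_zero, mul_zero, add_zero] at this
  exact neg_of_mul_neg_right this (sub_pos.2 (hx.1.trans hx.2)).le

theorem StrictConvexOn.pos_of_lt_of_eq_zero (hf : StrictConvexOn 𝕜 s f) (ha : a ∈ s)
    (hx : x ∈ s) (hfa : f a = 0) (hfb : f b = 0) (hab : a < b) (hbx : b < x) : 0 < f x := by
  have := hf.secant_strict_mono_aux1 ha hx hab hbx
  rw [hfa, hfb, mul_zero, mul_zero, zero_add] at this
  exact pos_of_mul_pos_right this (sub_pos.2 hab).le

end StrictConvex

theorem HasDerivAt.eventually_nhdsGT_lt {f : ℝ → ℝ} {f' a : ℝ} (hf : HasDerivAt f f' a)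
    (hf' : f' < 0) : ∀ᶠ x in 𝓝[>] a, f x < f a := by
  filter_upwards [(hf.tendsto_slope.mono_left (nhdsGT_le_nhdsNE a)).eventually_lt_const hf',
    self_mem_nhdsWithin] with x hslope hx
  rw [slope_def_field, div_lt_iff₀ (sub_pos.2 hx), zero_mul] at hslope
  linarith

namespace Real

theorem artanh_eq_log_sub_log {x : ℝ} (hx : x ∈ Ioo (-1) 1) :
    artanh x = (log (1 + x) - log (1 - x)) / 2 := by
  rw [artanh_eq_half_log (Ioo_subset_Icc_self hx),
    log_div (by linarith [hx.1]) (by linarith [hx.2])]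
  ring

theorem hasDerivAt_artanh {x : ℝ} (hx : x ∈ Ioo (-1) 1) :
    HasDerivAt artanh (1 / (1 - x ^ 2)) x := by
  have h₁ : 1 + x ≠ 0 := by linarith [hx.1]
  have h₂ : 1 - x ≠ 0 := by linarith [hx.2]
  have hlog := ((((hasDerivAt_id x).const_add 1).log h₁).sub
    (((hasDerivAt_id x).const_sub 1).log h₂)).div_const 2
  have heq : artanh =ᶠ[𝓝 x] fun y => (log (1 + y) - log (1 - y)) / 2 :=
    eventually_of_mem (Ioo_mem_nhds hx.1 hx.2) fun y hy => artanh_eq_log_sub_log hy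
  refine (hlog.congr_of_eventuallyEq heq).congr_deriv ?_
  rw [id, show 1 - x ^ 2 = (1 + x) * (1 - x) by ring]
  field_simp
  ring

theorem strictConvexOn_artanh : StrictConvexOn ℝ (Ico 0 1) artanh := by
  have hIoo : ∀ x ∈ Ico (0 : ℝ) 1, x ∈ Ioo (-1) 1 := fun x hx => ⟨by linarith [hx.1], hx.2⟩
  refine StrictMonoOn.strictConvexOn_of_deriv (convex_Ico 0 1)
    (fun x hx => (hasDerivAt_artanh (hIoo x hx)).continuousAt.continuousWithinAt) ?_
  rw [interior_Ico]
  intro x hx y hy hxy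
  rw [(hasDerivAt_artanh (hIoo x (Ioo_subset_Ico_self hx))).deriv,
    (hasDerivAt_artanh (hIoo y (Ioo_subset_Ico_self hy))).deriv]
  gcongr
  · nlinarith [hy.2, hy.1]
  · nlinarith [hx.1]

theorem strictConvexOn_artanh_sub_mul (β : ℝ) :
    StrictConvexOn ℝ (Ico 0 1) fun x => artanh x - β * x :=
  strictConvexOn_artanh.sub_concaveOn ((LinearMap.mulLeft ℝ β).concaveOn (convex_Ico 0 1))

end Real

section CurieWeiss

variable {β s m : ℝ}

theorem tanh_mul_eq_self_iff : tanh (β * m) = m ↔ m ∈ Ioo (-1) 1 ∧ artanh m = β * m := by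
  constructor
  · intro h
    exact ⟨h ▸ ⟨neg_one_lt_tanh _, tanh_lt_one _⟩, (congrArg artanh h).symm.trans (artanh_tanh _)⟩
  · rintro ⟨hm, hroot⟩
    rw [← hroot, tanh_artanh hm]

theorem artanh_lt_mul_of_mem_Ioo (hs : s ∈ Ioo 0 1) (hroot : artanh s = β * s)
    (hm : m ∈ Ioo 0 s) : artanh m < β * m := by
  have := (strictConvexOn_artanh_sub_mul β).neg_of_mem_Ioo_of_eq_zero
    (left_mem_Ico.2 one_pos) ⟨hs.1.le, hs.2⟩ (by simp) (sub_eq_zero.2 hroot) hm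
  linarith

theorem mul_lt_artanh_of_mem_Ioo (hs : s ∈ Ioo 0 1) (hroot : artanh s = β * s)
    (hm : m ∈ Ioo s 1) : β * m < artanh m := by
  have := (strictConvexOn_artanh_sub_mul β).pos_of_lt_of_eq_zero
    (left_mem_Ico.2 one_pos) ⟨hs.1.le.trans hm.1.le, hm.2⟩ (by simp) (sub_eq_zero.2 hroot) hs.1 hm.1
  linarith

theorem eq_of_artanh_eq_mul (hs : s ∈ Ioo 0 1) (hroot : artanh s = β * s) (hm : m ∈ Ioo 0 1)
    (hmroot : artanh m = β * m) : m = s := by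
  rcases lt_trichotomy m s with hlt | heq | hgt
  · exact absurd hmroot (artanh_lt_mul_of_mem_Ioo hs hroot ⟨hm.1, hlt⟩).ne
  · exact heq
  · exact absurd hmroot (mul_lt_artanh_of_mem_Ioo hs hroot ⟨hgt, hm.2⟩).ne'

theorem exists_artanh_eq_mul (hβ : 1 < β) : ∃ s ∈ Ioo 0 1, artanh s = β * s := by
  set g : ℝ → ℝ := fun x => artanh x - β * x
  have hg0 : HasDerivAt g (1 - β) 0 := by
    refine ((hasDerivAt_artanh (x := 0) ⟨by norm_num, by norm_num⟩).sub
      ((hasDerivAt_id' 0).const_mul β)).congr_deriv ?_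
    norm_num
  have htanh : tanh β ∈ Ioo 0 1 := by
    refine ⟨?_, tanh_lt_one β⟩
    rw [tanh_eq_sinh_div_cosh]
    exact div_pos (sinh_pos_iff.2 (by linarith)) (cosh_pos β)
  obtain ⟨a, hga, ha⟩ :=
    ((hg0.eventually_nhdsGT_lt (by linarith)).and (Ioo_mem_nhdsGT htanh.1)).exists
  have hgb : 0 < g (tanh β) := by
    simp only [g, artanh_tanh]
    nlinarith [htanh.2]
  have hcont : ContinuousOn g (Icc a (tanh β)) := fun x hx =>
    ((hasDerivAt_artanh ⟨by linarith [ha.1, hx.1], hx.2.trans_lt htanh.2⟩).continuousAt.sub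
      (continuousAt_const.mul continuousAt_id)).continuousWithinAt
  obtain ⟨c, hc, hgc⟩ := intermediate_value_Icc ha.2.le hcont
    ⟨hga.le.trans_eq (by simp [g]), hgb.le⟩
  exact ⟨c, ⟨ha.1.trans_le hc.1, hc.2.trans_lt htanh.2⟩, sub_eq_zero.1 hgc⟩

theorem setOf_tanh_mul_eq_self (hs : s ∈ Ioo 0 1) (hroot : artanh s = β * s) :
    {m : ℝ | tanh (β * m) = m} = {-s, 0, s} := by
  have hfix : tanh (β * s) = s := tanh_mul_eq_self_iff.2 ⟨⟨by linarith [hs.1], hs.2⟩, hroot⟩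
  ext m
  simp only [mem_ofPred_eq, mem_insert_iff, mem_singleton_iff]
  constructor
  · intro h
    obtain ⟨hm, hmroot⟩ := tanh_mul_eq_self_iff.1 h
    rcases lt_trichotomy m 0 with hneg | hzero | hpos
    · have hnegroot : artanh (-m) = β * -m := by
        rw [← (tanh_mul_eq_self_iff.1 (by rw [mul_neg, tanh_neg, h])).2]
      left
      linarith [eq_of_artanh_eq_mul hs hroot ⟨neg_pos.2 hneg, by linarith [hm.1]⟩ hnegroot]
    · exact Or.inr (Or.inl hzero)
    · exact Or.inr (Or.inr (eq_of_artanh_eq_mul hs hroot ⟨hpos, hm.2⟩ hmroot))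
  · rintro (rfl | rfl | rfl)
    · rw [mul_neg, tanh_neg, hfix]
    · rw [mul_zero, tanh_zero]
    · exact hfix

theorem cwFreeEnergy_neg (β m : ℝ) : cwFreeEnergy β (-m) = cwFreeEnergy β m := by
  simp only [cwFreeEnergy, sub_neg_eq_add, ← sub_eq_add_neg]
  ring

theorem cwFreeEnergy_abs (β m : ℝ) : cwFreeEnergy β |m| = cwFreeEnergy β m := by
  rcases abs_choice m with h | h <;> rw [h]
  exact cwFreeEnergy_neg β m

theorem continuous_cwFreeEnergy (β : ℝ) : Continuous (cwFreeEnergy β) := by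
  unfold cwFreeEnergy
  have h₁ : Continuous fun m : ℝ => (1 + m) / 2 := by fun_prop
  have h₂ : Continuous fun m : ℝ => (1 - m) / 2 := by fun_prop
  exact ((continuous_pow 2).neg.div_const 2).add
    (continuous_const.mul ((continuous_mul_log.comp h₁).add (continuous_mul_log.comp h₂)))

theorem hasDerivAt_cwFreeEnergy (β : ℝ) (hm : m ∈ Ioo (-1) 1) :
    HasDerivAt (cwFreeEnergy β) (-m + β⁻¹ * artanh m) m := by
  have h₁ : (1 + m) / 2 ≠ 0 := by linarith [hm.1]
  have h₂ : (1 - m) / 2 ≠ 0 := by linarith [hm.2]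
  have hplus := (hasDerivAt_mul_log h₁).comp m (((hasDerivAt_id' m).const_add 1).div_const 2)
  have hminus := (hasDerivAt_mul_log h₂).comp m (((hasDerivAt_id' m).const_sub 1).div_const 2)
  have hsq := ((hasDerivAt_pow 2 m).neg).div_const 2
  refine (hsq.add ((hplus.add hminus).const_mul β⁻¹)).congr_deriv ?_
  rw [artanh_eq_log_sub_log hm, log_div (by linarith [hm.1]) two_ne_zero,
    log_div (by linarith [hm.2]) two_ne_zero]
  push_cast
  ring

theorem strictAntiOn_cwFreeEnergy (hβ : 0 < β) (hs : s ∈ Ioo 0 1) (hroot : artanh s = β * s) :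
    StrictAntiOn (cwFreeEnergy β) (Icc 0 s) := by
  refine strictAntiOn_of_deriv_neg (convex_Icc 0 s) (continuous_cwFreeEnergy β).continuousOn ?_
  rw [interior_Icc]
  intro x hx
  rw [(hasDerivAt_cwFreeEnergy β ⟨by linarith [hx.1], hx.2.trans hs.2⟩).deriv]
  have := mul_lt_mul_of_pos_left (artanh_lt_mul_of_mem_Ioo hs hroot hx) (inv_pos.2 hβ)
  rw [inv_mul_cancel_left₀ hβ.ne'] at this
  linarith

theorem strictMonoOn_cwFreeEnergy (hβ : 0 < β) (hs : s ∈ Ioo 0 1) (hroot : artanh s = β * s) :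
    StrictMonoOn (cwFreeEnergy β) (Icc s 1) := by
  refine strictMonoOn_of_deriv_pos (convex_Icc s 1) (continuous_cwFreeEnergy β).continuousOn ?_
  rw [interior_Icc]
  intro x hx
  rw [(hasDerivAt_cwFreeEnergy β ⟨by linarith [hx.1, hs.1], hx.2⟩).deriv]
  have := mul_lt_mul_of_pos_left (mul_lt_artanh_of_mem_Ioo hs hroot hx) (inv_pos.2 hβ)
  rw [inv_mul_cancel_left₀ hβ.ne'] at this
  linarith

theorem cwFreeEnergy_lt_of_abs_ne (hβ : 0 < β) (hs : s ∈ Ioo 0 1) (hroot : artanh s = β * s)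
    (hm : m ∈ Icc (-1) 1) (hne : |m| ≠ s) : cwFreeEnergy β s < cwFreeEnergy β m := by
  rw [← cwFreeEnergy_abs β m]
  have habs : |m| ∈ Icc 0 1 := ⟨abs_nonneg m, abs_le.2 hm⟩
  rcases hne.lt_or_gt with hlt | hgt
  · exact strictAntiOn_cwFreeEnergy hβ hs hroot ⟨habs.1, hlt.le⟩ ⟨hs.1.le, le_rfl⟩ hlt
  · exact strictMonoOn_cwFreeEnergy hβ hs hroot ⟨le_rfl, hs.2.le⟩ ⟨hgt.le, habs.2⟩ hgt

theorem cwFreeEnergy_le (hβ : 0 < β) (hs : s ∈ Ioo 0 1) (hroot : artanh s = β * s)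
    (hm : m ∈ Icc (-1) 1) : cwFreeEnergy β s ≤ cwFreeEnergy β m := by
  rcases eq_or_ne |m| s with heq | hne
  · rw [← heq, cwFreeEnergy_abs]
  · exact (cwFreeEnergy_lt_of_abs_ne hβ hs hroot hm hne).le

end CurieWeiss

/-- For `β > 1` there is a unique `m⋆ ∈ (0,1)` with `tanh (β m⋆) = m⋆`; the
set of real solutions of `m = tanh (β m)` is exactly `{-m⋆, 0, m⋆}`; the minimum of `F_β`
on `[-1,1]` is attained exactly at `±m⋆` (with equal values); and `0` is a strict local
maximum of `F_β`. -/
theorem curie_weiss_supercritical (β : ℝ) (hβ : 1 < β) :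
    ∃ mstar : ℝ, mstar ∈ Ioo (0 : ℝ) 1 ∧ Real.tanh (β * mstar) = mstar ∧
      (∀ m ∈ Ioo (0 : ℝ) 1, Real.tanh (β * m) = m → m = mstar) ∧
      {m : ℝ | Real.tanh (β * m) = m} = {-mstar, 0, mstar} ∧
      (∀ m ∈ Icc (-1 : ℝ) 1, cwFreeEnergy β mstar ≤ cwFreeEnergy β m) ∧
      (∀ m ∈ Icc (-1 : ℝ) 1, cwFreeEnergy β m = cwFreeEnergy β mstar →
        m = mstar ∨ m = -mstar) ∧
      cwFreeEnergy β mstar = cwFreeEnergy β (-mstar) ∧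
      ∃ δ > (0 : ℝ), ∀ m ∈ Ioo (-δ) δ, m ≠ 0 → cwFreeEnergy β m < cwFreeEnergy β 0 := by
  obtain ⟨s, hs, hroot⟩ := exists_artanh_eq_mul hβ
  have hβ₀ : 0 < β := by linarith
  refine ⟨s, hs, tanh_mul_eq_self_iff.2 ⟨⟨by linarith [hs.1], hs.2⟩, hroot⟩,
    fun m hm h => eq_of_artanh_eq_mul hs hroot hm (tanh_mul_eq_self_iff.1 h).2,
    setOf_tanh_mul_eq_self hs hroot, fun m hm => cwFreeEnergy_le hβ₀ hs hroot hm,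
    fun m hm heq => ?_, (cwFreeEnergy_neg β s).symm, s, hs.1, fun m hm hm₀ => ?_⟩
  · by_contra hne
    exact (cwFreeEnergy_lt_of_abs_ne hβ₀ hs hroot hm
      (fun habs => hne ((abs_eq hs.1.le).1 habs))).ne' heq
  · rw [← cwFreeEnergy_abs]
    exact strictAntiOn_cwFreeEnergy hβ₀ hs hroot ⟨le_rfl, hs.1.le⟩
      ⟨abs_nonneg m, (abs_lt.2 hm).le⟩ (abs_pos.2 hm₀)
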